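/- Let D = {x ∈ ℝ³ : x₃ > 0} and let u : ℝ³ → ℝ³ be C³ up to the boundary, divergence-free, with u(x) = 0 for all x with x₃ = 0. Let ω = ∇∧u and θ(x₁,x₂) = ω(x₁,x₂,0). Then at every boundary point, ∂²ω²/∂x₃² = ∂³u¹/∂x₃³ + Δ_Γ θ² − ∂/∂x₂ (∇^Γ·θ). -/

import Mathlib

/-- Partial derivative of a scalar field on `ℝⁿ` in the `i`-th coordinate direction. -/
noncomputable def pd {n : ℕ} (i : Fin n) (f : (Fin n → ℝ) → ℝ) (x : Fin n → ℝ) : ℝ :=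
  fderiv ℝ f x (Pi.single i 1)

/-- The curl (vorticity) `ω = ∇ ∧ u` of a vector field on `ℝ³`. -/
noncomputable def curl3 (u : (Fin 3 → ℝ) → Fin 3 → ℝ) (x : Fin 3 → ℝ) : Fin 3 → ℝ :=
  ![pd 1 (fun y => u y 2) x - pd 2 (fun y => u y 1) x,
    pd 2 (fun y => u y 0) x - pd 0 (fun y => u y 2) x,
    pd 0 (fun y => u y 1) x - pd 1 (fun y => u y 0) x]

/-- The boundary vorticity `θ(x₁,x₂) = ω(x₁,x₂,0)` as a field on `∂D = ℝ²`. -/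
noncomputable def bdryVort (u : (Fin 3 → ℝ) → Fin 3 → ℝ) (p : Fin 2 → ℝ) : Fin 3 → ℝ :=
  curl3 u ![p 0, p 1, 0]

/-! On the boundary the no-slip condition kills every tangential derivative of `u`, so there
`θ = (-∂₃u², ∂₃u¹, 0)` and the right-hand side reduces to `∂₃³u¹ + ∂₁²∂₃u¹ + ∂₁∂₂∂₃u²`.
Everywhere, `∂₃²ω² = ∂₃³u¹ - ∂₁∂₃²u³`, and differentiating the divergence condition
`∂₃u³ = -∂₁u¹ - ∂₂u²` turns the last term into `∂₁²∂₃u¹ + ∂₁∂₂∂₃u²`, once the partial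
derivatives of the `C³` field are reordered. -/

section PartialDerivative

variable {n : ℕ}

theorem contDiff_pd {k m : WithTop ℕ∞} (i : Fin n) {f : (Fin n → ℝ) → ℝ}
    (hf : ContDiff ℝ m f) (hk : k + 1 ≤ m) : ContDiff ℝ k (pd i f) :=
  (ContinuousLinearMap.apply ℝ ℝ (Pi.single i (1 : ℝ) : Fin n → ℝ)).contDiff.comp
    (hf.fderiv_right hk)

theorem pd_add (i : Fin n) {f g : (Fin n → ℝ) → ℝ} (hf : Differentiable ℝ f)
    (hg : Differentiable ℝ g) : pd i (f + g) = pd i f + pd i g := by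
  funext x
  simp [pd, fderiv_add (hf x) (hg x)]

theorem pd_sub (i : Fin n) {f g : (Fin n → ℝ) → ℝ} (hf : Differentiable ℝ f)
    (hg : Differentiable ℝ g) : pd i (f - g) = pd i f - pd i g := by
  funext x
  simp [pd, fderiv_sub (hf x) (hg x)]

theorem pd_neg (i : Fin n) (f : (Fin n → ℝ) → ℝ) : pd i (-f) = -pd i f := by
  funext x
  simp [pd, fderiv_neg]

theorem pd_const (i : Fin n) (c : ℝ) : pd i (fun _ => c) = 0 := by
  funext x
  simp [pd]

theorem pd_pd_eq_fderiv_fderiv (i j : Fin n) {f : (Fin n → ℝ) → ℝ} {x : Fin n → ℝ}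
    (hf : DifferentiableAt ℝ (fderiv ℝ f) x) :
    pd i (pd j f) x = fderiv ℝ (fderiv ℝ f) x (Pi.single i 1) (Pi.single j 1) := by
  change fderiv ℝ ((ContinuousLinearMap.apply ℝ ℝ (Pi.single j 1)) ∘ fderiv ℝ f) x _ = _
  rw [fderiv_comp x (ContinuousLinearMap.differentiableAt _) hf, ContinuousLinearMap.fderiv]
  rfl

theorem pd_comm (i j : Fin n) {f : (Fin n → ℝ) → ℝ} (hf : ContDiff ℝ 2 f) :
    pd i (pd j f) = pd j (pd i f) := by
  funext x
  have hf' : DifferentiableAt ℝ (fderiv ℝ f) x :=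
    (hf.fderiv_right (m := 1) le_rfl).differentiable one_ne_zero x
  rw [pd_pd_eq_fderiv_fderiv i j hf', pd_pd_eq_fderiv_fderiv j i hf']
  exact hf.contDiffAt.isSymmSndFDerivAt (by simp) _ _

theorem pd_comp_clm {m : ℕ} (L : (Fin m → ℝ) →L[ℝ] (Fin n → ℝ)) {g : (Fin n → ℝ) → ℝ}
    (hg : Differentiable ℝ g) {i : Fin m} {j : Fin n}
    (hij : L (Pi.single i 1) = Pi.single j 1) :
    pd i (fun p => g (L p)) = fun p => pd j g (L p) := by
  funext p
  change fderiv ℝ (g ∘ L) p _ = _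
  rw [fderiv_comp p (hg _) L.differentiableAt, L.fderiv]
  simp [pd, hij]

end PartialDerivative

section Boundary

noncomputable def bdryEmb : (Fin 2 → ℝ) →L[ℝ] (Fin 3 → ℝ) :=
  LinearMap.toContinuousLinearMap
    { toFun := fun p => ![p 0, p 1, 0]
      map_add' := fun p q => by funext i; fin_cases i <;> simp
      map_smul' := fun c p => by funext i; fin_cases i <;> simp }

theorem bdryEmb_apply (p : Fin 2 → ℝ) : bdryEmb p = ![p 0, p 1, 0] := rfl

theorem bdryEmb_single_zero : bdryEmb (Pi.single 0 1) = Pi.single 0 1 := by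
  funext i; fin_cases i <;> simp [bdryEmb_apply]

theorem bdryEmb_single_one : bdryEmb (Pi.single 1 1) = Pi.single 1 1 := by
  funext i; fin_cases i <;> simp [bdryEmb_apply]

theorem bdryEmb_of_apply_two_eq_zero {x : Fin 3 → ℝ} (hx : x 2 = 0) :
    bdryEmb ![x 0, x 1] = x := by
  funext i; fin_cases i <;> simp [bdryEmb_apply, hx]

theorem pd_bdryEmb_eq_zero {f : (Fin 3 → ℝ) → ℝ} (hf : Differentiable ℝ f)
    (hf0 : ∀ x : Fin 3 → ℝ, x 2 = 0 → f x = 0) {j : Fin 3} (hj : j ≠ 2) (p : Fin 2 → ℝ) :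
    pd j f (bdryEmb p) = 0 := by
  obtain ⟨i, hij⟩ : ∃ i : Fin 2, bdryEmb (Pi.single i 1) = Pi.single j 1 := by
    fin_cases j
    exacts [⟨0, bdryEmb_single_zero⟩, ⟨1, bdryEmb_single_one⟩, absurd rfl hj]
  have hfE : (fun p => f (bdryEmb p)) = fun _ => 0 := funext fun q => hf0 _ rfl
  rw [← congrFun (pd_comp_clm bdryEmb hf hij) p, hfE, pd_const, Pi.zero_apply]

variable {u : (Fin 3 → ℝ) → Fin 3 → ℝ}

theorem bdryVort_zero_eq (hu : Differentiable ℝ u) (hnoslip : ∀ x, x 2 = 0 → u x = 0) :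
    (fun p => bdryVort u p 0) = fun p => -pd 2 (fun y => u y 1) (bdryEmb p) := by
  funext p
  change pd 1 (fun y => u y 2) (bdryEmb p) - _ = _
  rw [pd_bdryEmb_eq_zero (differentiable_pi.mp hu 2) (fun x hx => congrFun (hnoslip x hx) 2)
    (by decide), zero_sub]
  rfl

theorem bdryVort_one_eq (hu : Differentiable ℝ u) (hnoslip : ∀ x, x 2 = 0 → u x = 0) :
    (fun p => bdryVort u p 1) = fun p => pd 2 (fun y => u y 0) (bdryEmb p) := by
  funext p
  change _ - pd 0 (fun y => u y 2) (bdryEmb p) = _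
  rw [pd_bdryEmb_eq_zero (differentiable_pi.mp hu 2) (fun x hx => congrFun (hnoslip x hx) 2)
    (by decide), sub_zero]
  rfl

end Boundary

section Vorticity

variable {u : (Fin 3 → ℝ) → Fin 3 → ℝ}

theorem contDiff_pd_component (hu : ContDiff ℝ 3 u) (i k : Fin 3) :
    ContDiff ℝ 2 (pd i (fun y => u y k)) :=
  contDiff_pd i (contDiff_pi.mp hu k) le_rfl

theorem differentiable_pd_pd_component (hu : ContDiff ℝ 3 u) (i j k : Fin 3) :
    Differentiable ℝ (pd i (pd j (fun y => u y k))) :=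
  (contDiff_pd (k := 1) i (contDiff_pd_component hu j k) le_rfl).differentiable one_ne_zero

theorem pd_two_pd_two_curl3_one (hu : ContDiff ℝ 3 u)
    (hdiv : ∀ x : Fin 3 → ℝ, ∑ i : Fin 3, pd i (fun y => u y i) x = 0) :
    pd 2 (pd 2 (fun y => curl3 u y 1))
      = pd 2 (pd 2 (pd 2 (fun y => u y 0))) + pd 0 (pd 0 (pd 2 (fun y => u y 0)))
        + pd 1 (pd 0 (pd 2 (fun y => u y 1))) := by
  have hC2 := contDiff_pd_component hu
  have hC2' k : ContDiff ℝ 2 (fun y => u y k) := (contDiff_pi.mp hu k).of_le (by norm_num)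
  have hD1 i k : Differentiable ℝ (pd i (fun y => u y k)) :=
    (hC2 i k).differentiable two_ne_zero
  have hD2 := differentiable_pd_pd_component hu
  have hcurl : (fun y => curl3 u y 1) = pd 2 (fun y => u y 0) - pd 0 (fun y => u y 2) := rfl
  have hdiv' : pd 2 (fun y => u y 2) = -(pd 0 (fun y => u y 0) + pd 1 (fun y => u y 1)) := by
    funext y
    have := hdiv y
    simp only [Fin.sum_univ_three] at this
    simp only [Pi.neg_apply, Pi.add_apply]
    linarith
  have hcomm : pd 2 (pd 2 (pd 0 (fun y => u y 2)))
      = pd 0 (pd 2 (pd 2 (fun y => u y 2))) := by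
    rw [pd_comm 2 0 (hC2' 2), pd_comm 2 0 (hC2 2 2)]
  rw [hcurl, pd_sub 2 (hD1 2 0) (hD1 0 2), pd_sub 2 (hD2 2 2 0) (hD2 2 0 2), hcomm, hdiv',
    pd_neg, pd_add 2 (hD1 0 0) (hD1 1 1), pd_neg, pd_add 0 (hD2 2 0 0) (hD2 2 1 1),
    pd_comm 2 0 (hC2' 0), pd_comm 2 1 (hC2' 1), pd_comm 0 1 (hC2 2 1)]
  abel

theorem laplacian_bdryVort_one_sub_pd_div (hu : ContDiff ℝ 3 u)
    (hnoslip : ∀ x, x 2 = 0 → u x = 0) {x : Fin 3 → ℝ} (hx : x 2 = 0) :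
    pd 0 (pd 0 (fun p => bdryVort u p 1)) ![x 0, x 1]
        + pd 1 (pd 1 (fun p => bdryVort u p 1)) ![x 0, x 1]
        - pd 1 (fun p => pd 0 (fun q => bdryVort u q 0) p
            + pd 1 (fun q => bdryVort u q 1) p) ![x 0, x 1]
      = pd 0 (pd 0 (pd 2 (fun y => u y 0))) x + pd 1 (pd 0 (pd 2 (fun y => u y 1))) x := by
  have hu1 : Differentiable ℝ u := hu.differentiable (by norm_num)
  have hD1 i k : Differentiable ℝ (pd i (fun y => u y k)) :=
    (contDiff_pd_component hu i k).differentiable two_ne_zero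
  have hD2 := differentiable_pd_pd_component hu
  have hdivθ : (fun p => pd 0 (fun q => bdryVort u q 0) p + pd 1 (fun q => bdryVort u q 1) p)
      = fun p => (pd 1 (pd 2 (fun y => u y 0)) - pd 0 (pd 2 (fun y => u y 1))) (bdryEmb p) := by
    rw [bdryVort_zero_eq hu1 hnoslip, bdryVort_one_eq hu1 hnoslip,
      show (fun p => -pd 2 (fun y => u y 1) (bdryEmb p))
        = fun p => (-pd 2 (fun y => u y 1)) (bdryEmb p) from rfl,
      pd_comp_clm bdryEmb (hD1 2 1).neg bdryEmb_single_zero,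
      pd_comp_clm bdryEmb (hD1 2 0) bdryEmb_single_one, pd_neg]
    funext p
    simp only [Pi.neg_apply, Pi.sub_apply]
    ring
  rw [hdivθ, bdryVort_one_eq hu1 hnoslip,
    pd_comp_clm bdryEmb (hD1 2 0) bdryEmb_single_zero,
    pd_comp_clm bdryEmb (hD2 0 2 0) bdryEmb_single_zero,
    pd_comp_clm bdryEmb (hD1 2 0) bdryEmb_single_one,
    pd_comp_clm bdryEmb (hD2 1 2 0) bdryEmb_single_one,
    pd_comp_clm bdryEmb ((hD2 1 2 0).sub (hD2 0 2 1)) bdryEmb_single_one]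
  beta_reduce
  rw [bdryEmb_of_apply_two_eq_zero hx, pd_sub 1 (hD2 1 2 0) (hD2 0 2 1), Pi.sub_apply]
  ring

end Vorticity

/-- for a `C³`, divergence-free vector field `u` on the upper half space
vanishing on the boundary `{x₃ = 0}`, at every boundary point
`∂²ω²/∂x₃² = ∂³u¹/∂x₃³ + Δ_Γ θ² − ∂/∂x₂(∇^Γ·θ)`, where `θ(x₁,x₂) = ω(x₁,x₂,0)`. -/
theorem second_normal_derivative_omega2
    (u : (Fin 3 → ℝ) → Fin 3 → ℝ)
    (hu : ContDiff ℝ 3 u)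
    (hdiv : ∀ x : Fin 3 → ℝ, ∑ i : Fin 3, pd i (fun y => u y i) x = 0)
    (hnoslip : ∀ x : Fin 3 → ℝ, x 2 = 0 → u x = 0) :
    ∀ x : Fin 3 → ℝ, x 2 = 0 →
      pd 2 (pd 2 (fun y => curl3 u y 1)) x
        = pd 2 (pd 2 (pd 2 (fun y => u y 0))) x
          + (pd 0 (pd 0 (fun p => bdryVort u p 1)) ![x 0, x 1]
              + pd 1 (pd 1 (fun p => bdryVort u p 1)) ![x 0, x 1])
          - pd 1 (fun p => pd 0 (fun q => bdryVort u q 0) p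
              + pd 1 (fun q => bdryVort u q 1) p) ![x 0, x 1] := by
  intro x hx
  rw [pd_two_pd_two_curl3_one hu hdiv, add_sub_assoc,
    laplacian_bdryVort_one_sub_pd_div hu hnoslip hx]
  simp only [Pi.add_apply]
  ring
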